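/- Let H be a real inner product space, and let s : ℝⁿ → H be a differentiable map with s(x₀) ≠ 0. Then |s| is differentiable at x₀ and the gradient of |s| at x₀ has norm at most the operator/Frobenius norm of the derivative of s at x₀; equivalently |∇|s||² ≤ |∇s|² at x₀. -/

import Mathlib

/-! Since the norm is `1`-Lipschitz, each directional derivative of `‖s‖` is bounded by the
corresponding one of `s`. Squaring and summing over the standard orthonormal basis, Parseval's
identity turns the left-hand sum into `‖∇‖s‖‖²`. -/

theorem LipschitzWith.norm_fderiv_comp_apply_le {E F G : Type*}
    [NormedAddCommGroup E] [NormedSpace ℝ E] [NormedAddCommGroup F] [NormedSpace ℝ F]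
    [NormedAddCommGroup G] [NormedSpace ℝ G] {K : NNReal} {g : F → G} (hg : LipschitzWith K g)
    {s : E → F} {x : E} (hgs : DifferentiableAt ℝ g (s x)) (hs : DifferentiableAt ℝ s x)
    (v : E) : ‖fderiv ℝ (fun y => g (s y)) x v‖ ≤ K * ‖fderiv ℝ s x v‖ := by
  rw [show (fun y => g (s y)) = g ∘ s from rfl, fderiv_comp x hgs hs,
    ContinuousLinearMap.comp_apply]
  exact (fderiv ℝ g (s x)).le_of_opNorm_le (norm_fderiv_le_of_lipschitz ℝ hg) _

theorem OrthonormalBasis.sum_sq_fderiv_apply {ι E : Type*} [Fintype ι]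
    [NormedAddCommGroup E] [InnerProductSpace ℝ E] [CompleteSpace E]
    (b : OrthonormalBasis ι ℝ E) (f : E → ℝ) (x : E) :
    ∑ i, fderiv ℝ f x (b i) ^ 2 = ‖gradient f x‖ ^ 2 := by
  simp_rw [← b.sum_sq_inner_left (gradient f x), inner_gradient_left]

/-- Finite-dimensional model of the Kato inequality.  Let `H` be a real inner product space
and `s : ℝⁿ → H` differentiable at `x₀` with `s x₀ ≠ 0`.  Then `|s|` is differentiable at
`x₀` and `|∇|s||² ≤ |∇s|²`, where `|∇s|² = ∑ᵢ ‖∂ᵢ s‖²`. -/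
theorem kato_inequality_euclidean
    (n : ℕ) (H : Type*) [NormedAddCommGroup H] [InnerProductSpace ℝ H]
    (s : EuclideanSpace ℝ (Fin n) → H) (x₀ : EuclideanSpace ℝ (Fin n))
    (hs : DifferentiableAt ℝ s x₀) (hx : s x₀ ≠ 0) :
    DifferentiableAt ℝ (fun x => ‖s x‖) x₀ ∧
    ‖gradient (fun x => ‖s x‖) x₀‖ ^ 2 ≤
      ∑ i : Fin n, ‖fderiv ℝ s x₀ (EuclideanSpace.single i 1)‖ ^ 2 := by
  refine ⟨hs.norm ℝ hx, ?_⟩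
  have hnorm : DifferentiableAt ℝ (‖·‖) (s x₀) :=
    (contDiffAt_norm ℝ hx (n := 1)).differentiableAt one_ne_zero
  rw [← (EuclideanSpace.basisFun (Fin n) ℝ).sum_sq_fderiv_apply]
  refine Finset.sum_le_sum fun i _ => ?_
  have h := lipschitzWith_one_norm.norm_fderiv_comp_apply_le hnorm hs (EuclideanSpace.single i 1)
  rw [NNReal.coe_one, one_mul] at h
  simpa [EuclideanSpace.basisFun_apply, sq_abs] using pow_le_pow_left₀ (norm_nonneg _) h 2
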